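/- Unbiasedness of the N-qubit Pauli-basis classical shadow reconstruction: for every N ≥ 1 and every 2^N × 2^N complex matrix M, 3^{−N} · Σ_{W ∈ {X,Y,Z}^N} Σ_{b ∈ {+1,−1}^N} Tr( M · (Π_{W₁,b₁} ⊗ ⋯ ⊗ Π_{W_N,b_N}) ) · ( (3·Π_{W₁,b₁} − I) ⊗ ⋯ ⊗ (3·Π_{W_N,b_N} − I) ) = M, where ⊗ denotes the Kronecker (tensor) product of matrices. -/

import Mathlib

open Matrix

/-- The three Pauli matrices `X`, `Y`, `Z`. -/
noncomputable def pauli : Fin 3 → Matrix (Fin 2) (Fin 2) ℂ :=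
  ![!![0, 1; 1, 0], !![0, -Complex.I; Complex.I, 0], !![1, 0; 0, -1]]

/-- The sign `+1`/`−1` attached to a Boolean outcome. -/
def bSign (b : Bool) : ℂ := if b then 1 else -1

/-- The projector `Π_{W,b} = (I + b·W)/2` onto the `b`-eigenspace of the Pauli matrix `W`. -/
noncomputable def pauliProj (W : Fin 3) (b : Bool) : Matrix (Fin 2) (Fin 2) ℂ :=
  (2⁻¹ : ℂ) • ((1 : Matrix (Fin 2) (Fin 2) ℂ) + bSign b • pauli W)

/-- The `N`-fold Kronecker (tensor) product of `2×2` matrices, realized as a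
`2^N × 2^N` matrix indexed by bitstrings `Fin N → Fin 2`. -/
noncomputable def kronN {N : ℕ} (f : Fin N → Matrix (Fin 2) (Fin 2) ℂ) :
    Matrix (Fin N → Fin 2) (Fin N → Fin 2) ℂ :=
  Matrix.of fun r c => ∏ i, f i (r i) (c i)

lemma single (r c x y : Fin 2) :
    ∑ p : Fin 3 × Bool, pauliProj p.1 p.2 c r * ((3:ℂ) • pauliProj p.1 p.2 - 1) x y
      = 3 * ((if r = x then (1:ℂ) else 0) * (if c = y then 1 else 0)) := by
  rw [Fintype.sum_prod_type]
  fin_cases r <;> fin_cases c <;> fin_cases x <;> fin_cases y <;>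
    simp [pauliProj, pauli, bSign, Fin.sum_univ_three, Matrix.smul_apply, Matrix.sub_apply,
      Matrix.one_apply, Matrix.add_apply, Fin.isValue] <;> ring_nf <;>
    simp [Complex.I_sq] <;> ring

lemma sum_fun_prod {N : ℕ} (F : Fin N → Fin 3 × Bool → ℂ) :
    ∑ W : Fin N → Fin 3, ∑ b : Fin N → Bool, ∏ i, F i (W i, b i)
      = ∏ i, ∑ p : Fin 3 × Bool, F i p := by
  have h := Finset.prod_univ_sum (fun _ : Fin N => (Finset.univ : Finset (Fin 3 × Bool)))
    (fun i p => F i p)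
  rw [h, Fintype.piFinset_univ]
  rw [← (Equiv.arrowProdEquivProdArrow (Fin N) (fun _ => Fin 3) (fun _ => Bool)).symm.sum_comp
    (fun g : Fin N → Fin 3 × Bool => ∏ i, F i (g i))]
  rw [Fintype.sum_prod_type]
  rfl

lemma prodif {N : ℕ} (r x : Fin N → Fin 2) :
    (∏ i, if r i = x i then (1:ℂ) else 0) = if r = x then 1 else 0 := by
  by_cases h : r = x
  · simp [h]
  · obtain ⟨i, hi⟩ := Function.ne_iff.mp h
    rw [if_neg h]
    exact Finset.prod_eq_zero (Finset.mem_univ i) (if_neg hi)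

/-- **Unbiasedness of the `N`-qubit Pauli-basis classical shadow reconstruction**:
for every `N ≥ 1` and every `2^N × 2^N` matrix `M`,
`3^{−N} Σ_{W ∈ {X,Y,Z}^N} Σ_{b ∈ {±1}^N} Tr(M (Π_{W₁,b₁} ⊗ ⋯ ⊗ Π_{W_N,b_N}))
  ((3Π_{W₁,b₁} − I) ⊗ ⋯ ⊗ (3Π_{W_N,b_N} − I)) = M`. -/
theorem n_qubit_pauli_shadow_unbiased
    (N : ℕ) (hN : 1 ≤ N) (M : Matrix (Fin N → Fin 2) (Fin N → Fin 2) ℂ) :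
    (((3 : ℂ) ^ N)⁻¹) • ∑ W : Fin N → Fin 3, ∑ b : Fin N → Bool,
        (M * kronN fun i => pauliProj (W i) (b i)).trace •
          kronN (fun i => (3 : ℂ) • pauliProj (W i) (b i) - (1 : Matrix (Fin 2) (Fin 2) ℂ))
      = M := by
  ext x y
  have expand : ∀ (W : Fin N → Fin 3) (b : Fin N → Bool),
      ((M * kronN fun i => pauliProj (W i) (b i)).trace •
        kronN (fun i => (3:ℂ) • pauliProj (W i) (b i) - 1)) x y
      = ∑ r, ∑ c, M r c * ∏ i, (pauliProj (W i) (b i) (c i) (r i) *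
          ((3:ℂ) • pauliProj (W i) (b i) - 1) (x i) (y i)) := by
    intro W b
    simp only [Matrix.smul_apply, smul_eq_mul, Matrix.trace, Matrix.diag, Matrix.mul_apply,
      kronN, Matrix.of_apply]
    rw [Finset.sum_mul]
    refine Finset.sum_congr rfl fun r _ => ?_
    rw [Finset.sum_mul]
    refine Finset.sum_congr rfl fun c _ => ?_
    rw [mul_assoc, ← Finset.prod_mul_distrib]
  rw [Matrix.smul_apply, Matrix.sum_apply]
  simp only [Matrix.sum_apply, expand]
  have swap : (∑ W : Fin N → Fin 3, ∑ b : Fin N → Bool, ∑ r, ∑ c, M r c *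
        ∏ i, (pauliProj (W i) (b i) (c i) (r i) *
          ((3:ℂ) • pauliProj (W i) (b i) - 1) (x i) (y i)))
      = ∑ r, ∑ c, M r c * ∑ W : Fin N → Fin 3, ∑ b : Fin N → Bool,
        ∏ i, (pauliProj (W i) (b i) (c i) (r i) *
          ((3:ℂ) • pauliProj (W i) (b i) - 1) (x i) (y i)) := by
    rw [Finset.sum_congr rfl fun W _ => Finset.sum_comm, Finset.sum_comm]
    refine Finset.sum_congr rfl fun r _ => ?_
    rw [Finset.sum_congr rfl fun W _ => Finset.sum_comm, Finset.sum_comm]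
    refine Finset.sum_congr rfl fun c _ => ?_
    simp only [← Finset.mul_sum]
  rw [swap]
  have key : ∀ (r c : Fin N → Fin 2),
      (∑ W : Fin N → Fin 3, ∑ b : Fin N → Bool,
        ∏ i, (pauliProj (W i) (b i) (c i) (r i) *
          ((3:ℂ) • pauliProj (W i) (b i) - 1) (x i) (y i)))
      = (3:ℂ)^N * ((if r = x then 1 else 0) * (if c = y then 1 else 0)) := by
    intro r c
    rw [sum_fun_prod (fun i p => pauliProj p.1 p.2 (c i) (r i) *
      ((3:ℂ) • pauliProj p.1 p.2 - 1) (x i) (y i))]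
    have : ∀ i : Fin N, (∑ p : Fin 3 × Bool, pauliProj p.1 p.2 (c i) (r i) *
        ((3:ℂ) • pauliProj p.1 p.2 - 1) (x i) (y i))
        = 3 * ((if r i = x i then (1:ℂ) else 0) * (if c i = y i then 1 else 0)) :=
      fun i => single (r i) (c i) (x i) (y i)
    simp only [this]
    rw [Finset.prod_mul_distrib, Finset.prod_mul_distrib, Finset.prod_const,
      Finset.card_univ, Fintype.card_fin, prodif, prodif]
  simp only [key]
  have h3 : ((3:ℂ)^N) ≠ 0 := pow_ne_zero _ (by norm_num)
  simp only [mul_ite, ite_mul, mul_one, mul_zero, one_mul, zero_mul, Finset.sum_ite_eq',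
    Finset.mem_univ, if_true, smul_eq_mul]
  field_simp
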